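/- Let Y be a sublattice of an infinitely distributive lattice L. Then for every ordinal λ ≥ 0, the λ-O-adherence Y^O_λ and the λ-uO-adherence Y^uO_λ are sublattices of L. -/

import Mathlib

universe u v w

section Defs

variable {L : Type u} [Lattice L]

/-- O-convergence of a net indexed by a preordered (directed) index type. -/
def OConv {Γ : Type v} [Preorder Γ] (f : Γ → L) (x : L) : Prop :=
  ∃ M N : Set L, M.Nonempty ∧ DirectedOn (· ≤ ·) M ∧ N.Nonempty ∧ DirectedOn (· ≥ ·) N ∧
    IsLUB M x ∧ IsGLB N x ∧
    ∀ m ∈ M, ∀ n ∈ N, ∃ γ₀ : Γ, ∀ γ : Γ, γ₀ ≤ γ → f γ ∈ Set.Icc m n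

/-- unbounded order convergence of a net -/
def UOConv {Γ : Type v} [Preorder Γ] (f : Γ → L) (x : L) : Prop :=
  ∀ s t : L, s ≤ t → OConv (fun γ => (f γ ⊓ t) ⊔ s) ((x ⊓ t) ⊔ s)

/-- infinitely distributive lattice -/
def InfDistrib (L : Type u) [Lattice L] : Prop :=
  (∀ (x : L) (S : Set L) (a : L), IsGLB S a → IsGLB ((fun s => x ⊔ s) '' S) (x ⊔ a)) ∧
  (∀ (x : L) (S : Set L) (a : L), IsLUB S a → IsLUB ((fun s => x ⊓ s) '' S) (x ⊓ a))

/-- sublattice (as a set) -/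
def IsSubl (Y : Set L) : Prop :=
  ∀ a ∈ Y, ∀ b ∈ Y, a ⊔ b ∈ Y ∧ a ⊓ b ∈ Y

/-- 1-O-adherence -/
def OAdh1 (X : Set L) : Set L :=
  {x | ∃ (Γ : Type u) (_ : Preorder Γ), IsDirected Γ (· ≤ ·) ∧ Nonempty Γ ∧
      ∃ f : Γ → L, (∀ γ, f γ ∈ X) ∧ OConv f x}

/-- 1-uO-adherence -/
def UOAdh1 (X : Set L) : Set L :=
  {x | ∃ (Γ : Type u) (_ : Preorder Γ), IsDirected Γ (· ≤ ·) ∧ Nonempty Γ ∧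
      ∃ f : Γ → L, (∀ γ, f γ ∈ X) ∧ UOConv f x}

def OClosedSet (X : Set L) : Prop := OAdh1 X = X
def UOClosedSet (X : Set L) : Prop := UOAdh1 X = X

end Defs

section Lemmas

variable {L : Type u} [Lattice L]

lemma oconv_const {Γ : Type v} [Preorder Γ] [Nonempty Γ] (x : L) :
    OConv (fun _ : Γ => x) x := by
  refine ⟨{x}, {x}, ⟨x, rfl⟩, ?_, ⟨x, rfl⟩, ?_, isLUB_singleton, isGLB_singleton, ?_⟩
  · rintro a rfl b rfl; exact ⟨_, rfl, le_rfl, le_rfl⟩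
  · rintro a rfl b rfl; exact ⟨_, rfl, le_rfl, le_rfl⟩
  · rintro m rfl n rfl
    exact ⟨Classical.arbitrary Γ, fun γ _ => ⟨le_rfl, le_rfl⟩⟩

lemma uoconv_const {Γ : Type v} [Preorder Γ] [Nonempty Γ] (x : L) :
    UOConv (fun _ : Γ => x) x := fun _ _ _ => oconv_const _

lemma isGLB_image2_sup (hL : InfDistrib L) {N₁ N₂ : Set L} {x y : L}
    (h₁ : IsGLB N₁ x) (h₂ : IsGLB N₂ y) :
    IsGLB (Set.image2 (· ⊔ ·) N₁ N₂) (x ⊔ y) := by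
  constructor
  · rintro c ⟨n₁, hn₁, n₂, hn₂, rfl⟩
    exact sup_le_sup (h₁.1 hn₁) (h₂.1 hn₂)
  · intro b hb
    have step1 : ∀ n₁ ∈ N₁, b ≤ n₁ ⊔ y := by
      intro n₁ hn₁
      have := hL.1 n₁ N₂ y h₂
      refine this.2 ?_
      rintro c ⟨n₂, hn₂, rfl⟩
      exact hb ⟨n₁, hn₁, n₂, hn₂, rfl⟩
    have := hL.1 y N₁ x h₁
    have hb2 : b ≤ y ⊔ x := by
      refine this.2 ?_
      rintro c ⟨n₁, hn₁, rfl⟩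
      show b ≤ y ⊔ n₁
      rw [sup_comm]
      exact step1 n₁ hn₁
    rwa [sup_comm] at hb2

lemma isLUB_image2_inf (hL : InfDistrib L) {N₁ N₂ : Set L} {x y : L}
    (h₁ : IsLUB N₁ x) (h₂ : IsLUB N₂ y) :
    IsLUB (Set.image2 (· ⊓ ·) N₁ N₂) (x ⊓ y) := by
  constructor
  · rintro c ⟨n₁, hn₁, n₂, hn₂, rfl⟩
    exact inf_le_inf (h₁.1 hn₁) (h₂.1 hn₂)
  · intro b hb
    have step1 : ∀ n₁ ∈ N₁, n₁ ⊓ y ≤ b := by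
      intro n₁ hn₁
      have := hL.2 n₁ N₂ y h₂
      refine this.2 ?_
      rintro c ⟨n₂, hn₂, rfl⟩
      exact hb ⟨n₁, hn₁, n₂, hn₂, rfl⟩
    have := hL.2 y N₁ x h₁
    have hb2 : y ⊓ x ≤ b := by
      refine this.2 ?_
      rintro c ⟨n₁, hn₁, rfl⟩
      show y ⊓ n₁ ≤ b
      rw [inf_comm]
      exact step1 n₁ hn₁
    rwa [inf_comm] at hb2

lemma isLUB_image2_sup {M₁ M₂ : Set L} {x y : L}
    (ne₁ : M₁.Nonempty) (ne₂ : M₂.Nonempty)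
    (h₁ : IsLUB M₁ x) (h₂ : IsLUB M₂ y) :
    IsLUB (Set.image2 (· ⊔ ·) M₁ M₂) (x ⊔ y) := by
  constructor
  · rintro c ⟨m₁, hm₁, m₂, hm₂, rfl⟩
    exact sup_le_sup (h₁.1 hm₁) (h₂.1 hm₂)
  · intro b hb
    obtain ⟨m₂₀, hm₂₀⟩ := ne₂
    obtain ⟨m₁₀, hm₁₀⟩ := ne₁
    have hx : x ≤ b := h₁.2 fun m₁ hm₁ =>
      le_trans le_sup_left (hb ⟨m₁, hm₁, m₂₀, hm₂₀, rfl⟩)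
    have hy : y ≤ b := h₂.2 fun m₂ hm₂ =>
      le_trans le_sup_right (hb ⟨m₁₀, hm₁₀, m₂, hm₂, rfl⟩)
    exact sup_le hx hy

lemma isGLB_image2_inf {M₁ M₂ : Set L} {x y : L}
    (ne₁ : M₁.Nonempty) (ne₂ : M₂.Nonempty)
    (h₁ : IsGLB M₁ x) (h₂ : IsGLB M₂ y) :
    IsGLB (Set.image2 (· ⊓ ·) M₁ M₂) (x ⊓ y) := by
  constructor
  · rintro c ⟨m₁, hm₁, m₂, hm₂, rfl⟩
    exact inf_le_inf (h₁.1 hm₁) (h₂.1 hm₂)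
  · intro b hb
    obtain ⟨m₂₀, hm₂₀⟩ := ne₂
    obtain ⟨m₁₀, hm₁₀⟩ := ne₁
    have hx : b ≤ x := h₁.2 fun m₁ hm₁ =>
      le_trans (hb ⟨m₁, hm₁, m₂₀, hm₂₀, rfl⟩) inf_le_left
    have hy : b ≤ y := h₂.2 fun m₂ hm₂ =>
      le_trans (hb ⟨m₁₀, hm₁₀, m₂, hm₂, rfl⟩) inf_le_right
    exact le_inf hx hy

lemma directedOn_image2_sup {M₁ M₂ : Set L}
    (h₁ : DirectedOn (· ≤ ·) M₁) (h₂ : DirectedOn (· ≤ ·) M₂) :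
    DirectedOn (· ≤ ·) (Set.image2 (· ⊔ ·) M₁ M₂) := by
  rintro a ⟨a₁, ha₁, a₂, ha₂, rfl⟩ b ⟨b₁, hb₁, b₂, hb₂, rfl⟩
  obtain ⟨c₁, hc₁, hac₁, hbc₁⟩ := h₁ a₁ ha₁ b₁ hb₁
  obtain ⟨c₂, hc₂, hac₂, hbc₂⟩ := h₂ a₂ ha₂ b₂ hb₂
  exact ⟨c₁ ⊔ c₂, ⟨c₁, hc₁, c₂, hc₂, rfl⟩, sup_le_sup hac₁ hac₂, sup_le_sup hbc₁ hbc₂⟩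

lemma directedOn_ge_image2_sup {M₁ M₂ : Set L}
    (h₁ : DirectedOn (· ≥ ·) M₁) (h₂ : DirectedOn (· ≥ ·) M₂) :
    DirectedOn (· ≥ ·) (Set.image2 (· ⊔ ·) M₁ M₂) := by
  rintro a ⟨a₁, ha₁, a₂, ha₂, rfl⟩ b ⟨b₁, hb₁, b₂, hb₂, rfl⟩
  obtain ⟨c₁, hc₁, hac₁, hbc₁⟩ := h₁ a₁ ha₁ b₁ hb₁
  obtain ⟨c₂, hc₂, hac₂, hbc₂⟩ := h₂ a₂ ha₂ b₂ hb₂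
  exact ⟨c₁ ⊔ c₂, ⟨c₁, hc₁, c₂, hc₂, rfl⟩, sup_le_sup hac₁ hac₂, sup_le_sup hbc₁ hbc₂⟩

lemma directedOn_image2_inf {M₁ M₂ : Set L}
    (h₁ : DirectedOn (· ≤ ·) M₁) (h₂ : DirectedOn (· ≤ ·) M₂) :
    DirectedOn (· ≤ ·) (Set.image2 (· ⊓ ·) M₁ M₂) := by
  rintro a ⟨a₁, ha₁, a₂, ha₂, rfl⟩ b ⟨b₁, hb₁, b₂, hb₂, rfl⟩
  obtain ⟨c₁, hc₁, hac₁, hbc₁⟩ := h₁ a₁ ha₁ b₁ hb₁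
  obtain ⟨c₂, hc₂, hac₂, hbc₂⟩ := h₂ a₂ ha₂ b₂ hb₂
  exact ⟨c₁ ⊓ c₂, ⟨c₁, hc₁, c₂, hc₂, rfl⟩, inf_le_inf hac₁ hac₂, inf_le_inf hbc₁ hbc₂⟩

lemma directedOn_ge_image2_inf {M₁ M₂ : Set L}
    (h₁ : DirectedOn (· ≥ ·) M₁) (h₂ : DirectedOn (· ≥ ·) M₂) :
    DirectedOn (· ≥ ·) (Set.image2 (· ⊓ ·) M₁ M₂) := by
  rintro a ⟨a₁, ha₁, a₂, ha₂, rfl⟩ b ⟨b₁, hb₁, b₂, hb₂, rfl⟩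
  obtain ⟨c₁, hc₁, hac₁, hbc₁⟩ := h₁ a₁ ha₁ b₁ hb₁
  obtain ⟨c₂, hc₂, hac₂, hbc₂⟩ := h₂ a₂ ha₂ b₂ hb₂
  exact ⟨c₁ ⊓ c₂, ⟨c₁, hc₁, c₂, hc₂, rfl⟩, inf_le_inf hac₁ hac₂, inf_le_inf hbc₁ hbc₂⟩

lemma oconv_sup (hL : InfDistrib L) {Γ₁ : Type v} {Γ₂ : Type w}
    [Preorder Γ₁] [Preorder Γ₂] {f : Γ₁ → L} {g : Γ₂ → L} {x y : L}
    (hf : OConv f x) (hg : OConv g y) :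
    OConv (fun p : Γ₁ × Γ₂ => f p.1 ⊔ g p.2) (x ⊔ y) := by
  obtain ⟨M₁, N₁, Mne₁, Md₁, Nne₁, Nd₁, hM₁, hN₁, hev₁⟩ := hf
  obtain ⟨M₂, N₂, Mne₂, Md₂, Nne₂, Nd₂, hM₂, hN₂, hev₂⟩ := hg
  refine ⟨Set.image2 (· ⊔ ·) M₁ M₂, Set.image2 (· ⊔ ·) N₁ N₂,
    Mne₁.image2 Mne₂, directedOn_image2_sup Md₁ Md₂,
    Nne₁.image2 Nne₂, directedOn_ge_image2_sup Nd₁ Nd₂,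
    isLUB_image2_sup Mne₁ Mne₂ hM₁ hM₂, isGLB_image2_sup hL hN₁ hN₂, ?_⟩
  rintro m ⟨m₁, hm₁, m₂, hm₂, rfl⟩ n ⟨n₁, hn₁, n₂, hn₂, rfl⟩
  obtain ⟨γ₁, hγ₁⟩ := hev₁ m₁ hm₁ n₁ hn₁
  obtain ⟨γ₂, hγ₂⟩ := hev₂ m₂ hm₂ n₂ hn₂
  refine ⟨(γ₁, γ₂), fun γ hγ => ?_⟩
  obtain ⟨h1, h2⟩ := hγ₁ γ.1 hγ.1
  obtain ⟨h3, h4⟩ := hγ₂ γ.2 hγ.2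
  exact ⟨sup_le_sup h1 h3, sup_le_sup h2 h4⟩

lemma oconv_inf (hL : InfDistrib L) {Γ₁ : Type v} {Γ₂ : Type w}
    [Preorder Γ₁] [Preorder Γ₂] {f : Γ₁ → L} {g : Γ₂ → L} {x y : L}
    (hf : OConv f x) (hg : OConv g y) :
    OConv (fun p : Γ₁ × Γ₂ => f p.1 ⊓ g p.2) (x ⊓ y) := by
  obtain ⟨M₁, N₁, Mne₁, Md₁, Nne₁, Nd₁, hM₁, hN₁, hev₁⟩ := hf
  obtain ⟨M₂, N₂, Mne₂, Md₂, Nne₂, Nd₂, hM₂, hN₂, hev₂⟩ := hg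
  refine ⟨Set.image2 (· ⊓ ·) M₁ M₂, Set.image2 (· ⊓ ·) N₁ N₂,
    Mne₁.image2 Mne₂, directedOn_image2_inf Md₁ Md₂,
    Nne₁.image2 Nne₂, directedOn_ge_image2_inf Nd₁ Nd₂,
    isLUB_image2_inf hL hM₁ hM₂, isGLB_image2_inf Nne₁ Nne₂ hN₁ hN₂, ?_⟩
  rintro m ⟨m₁, hm₁, m₂, hm₂, rfl⟩ n ⟨n₁, hn₁, n₂, hn₂, rfl⟩
  obtain ⟨γ₁, hγ₁⟩ := hev₁ m₁ hm₁ n₁ hn₁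
  obtain ⟨γ₂, hγ₂⟩ := hev₂ m₂ hm₂ n₂ hn₂
  refine ⟨(γ₁, γ₂), fun γ hγ => ?_⟩
  obtain ⟨h1, h2⟩ := hγ₁ γ.1 hγ.1
  obtain ⟨h3, h4⟩ := hγ₂ γ.2 hγ.2
  exact ⟨inf_le_inf h1 h3, inf_le_inf h2 h4⟩

/-- binary distributivity from infinite distributivity -/
lemma bin_inf_sup (hL : InfDistrib L) (a b c : L) : a ⊓ (b ⊔ c) = (a ⊓ b) ⊔ (a ⊓ c) := by
  have h := hL.2 a {b, c} (b ⊔ c) isLUB_pair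
  rw [Set.image_pair] at h
  exact h.unique isLUB_pair

lemma bin_sup_inf (hL : InfDistrib L) (a b c : L) : a ⊔ (b ⊓ c) = (a ⊔ b) ⊓ (a ⊔ c) := by
  have h := hL.1 a {b, c} (b ⊓ c) isGLB_pair
  rw [Set.image_pair] at h
  exact h.unique isGLB_pair

lemma h_sup (hL : InfDistrib L) (s t a b : L) :
    ((a ⊔ b) ⊓ t) ⊔ s = ((a ⊓ t) ⊔ s) ⊔ ((b ⊓ t) ⊔ s) := by
  rw [inf_comm, bin_inf_sup hL, inf_comm t a, inf_comm t b, sup_sup_distrib_right]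

lemma h_inf (hL : InfDistrib L) (s t a b : L) :
    ((a ⊓ b) ⊓ t) ⊔ s = ((a ⊓ t) ⊔ s) ⊓ ((b ⊓ t) ⊔ s) := by
  rw [inf_inf_distrib_right, sup_comm, bin_sup_inf hL, sup_comm s (a ⊓ t), sup_comm s (b ⊓ t)]

lemma uoconv_sup (hL : InfDistrib L) {Γ₁ : Type v} {Γ₂ : Type w}
    [Preorder Γ₁] [Preorder Γ₂] {f : Γ₁ → L} {g : Γ₂ → L} {x y : L}
    (hf : UOConv f x) (hg : UOConv g y) :
    UOConv (fun p : Γ₁ × Γ₂ => f p.1 ⊔ g p.2) (x ⊔ y) := by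
  intro s t hst
  have h := oconv_sup hL (hf s t hst) (hg s t hst)
  have e : (fun p : Γ₁ × Γ₂ => ((f p.1 ⊔ g p.2) ⊓ t) ⊔ s)
      = fun p : Γ₁ × Γ₂ => ((f p.1 ⊓ t) ⊔ s) ⊔ ((g p.2 ⊓ t) ⊔ s) :=
    funext fun p => h_sup hL s t _ _
  rw [show ((x ⊔ y) ⊓ t) ⊔ s = ((x ⊓ t) ⊔ s) ⊔ ((y ⊓ t) ⊔ s) from h_sup hL s t x y]
  exact e ▸ h

lemma uoconv_inf (hL : InfDistrib L) {Γ₁ : Type v} {Γ₂ : Type w}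
    [Preorder Γ₁] [Preorder Γ₂] {f : Γ₁ → L} {g : Γ₂ → L} {x y : L}
    (hf : UOConv f x) (hg : UOConv g y) :
    UOConv (fun p : Γ₁ × Γ₂ => f p.1 ⊓ g p.2) (x ⊓ y) := by
  intro s t hst
  have h := oconv_inf hL (hf s t hst) (hg s t hst)
  have e : (fun p : Γ₁ × Γ₂ => ((f p.1 ⊓ g p.2) ⊓ t) ⊔ s)
      = fun p : Γ₁ × Γ₂ => ((f p.1 ⊓ t) ⊔ s) ⊓ ((g p.2 ⊓ t) ⊔ s) :=
    funext fun p => h_inf hL s t _ _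
  rw [show ((x ⊓ y) ⊓ t) ⊔ s = ((x ⊓ t) ⊔ s) ⊓ ((y ⊓ t) ⊔ s) from h_inf hL s t x y]
  exact e ▸ h

instance prodDirected {Γ₁ Γ₂ : Type*} [Preorder Γ₁] [Preorder Γ₂]
    [IsDirected Γ₁ (· ≤ ·)] [IsDirected Γ₂ (· ≤ ·)] :
    IsDirected (Γ₁ × Γ₂) (· ≤ ·) := by
  constructor
  intro a b
  obtain ⟨c₁, h₁, h₂⟩ := directed_of (· ≤ ·) a.1 b.1
  obtain ⟨c₂, h₃, h₄⟩ := directed_of (· ≤ ·) a.2 b.2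
  exact ⟨(c₁, c₂), ⟨h₁, h₃⟩, ⟨h₂, h₄⟩⟩

lemma subset_oadh1 (X : Set L) : X ⊆ OAdh1 X := by
  intro x hx
  exact ⟨PUnit, inferInstance, inferInstance, inferInstance,
    fun _ => x, fun _ => hx, oconv_const x⟩

lemma subset_uoadh1 (X : Set L) : X ⊆ UOAdh1 X := by
  intro x hx
  exact ⟨PUnit, inferInstance, inferInstance, inferInstance,
    fun _ => x, fun _ => hx, uoconv_const x⟩

lemma oadh1_subl (hL : InfDistrib L) {X : Set L} (hX : IsSubl X) : IsSubl (OAdh1 X) := by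
  rintro a ⟨Γ₁, i₁, d₁, ne₁, f, hfX, hf⟩ b ⟨Γ₂, i₂, d₂, ne₂, g, hgX, hg⟩
  letI := i₁; letI := i₂; letI := d₁; letI := d₂; letI := ne₁; letI := ne₂
  constructor
  · exact ⟨Γ₁ × Γ₂, inferInstance, prodDirected, inferInstance,
      fun p => f p.1 ⊔ g p.2, fun p => (hX _ (hfX p.1) _ (hgX p.2)).1,
      oconv_sup hL hf hg⟩
  · exact ⟨Γ₁ × Γ₂, inferInstance, prodDirected, inferInstance,
      fun p => f p.1 ⊓ g p.2, fun p => (hX _ (hfX p.1) _ (hgX p.2)).2,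
      oconv_inf hL hf hg⟩

lemma uoadh1_subl (hL : InfDistrib L) {X : Set L} (hX : IsSubl X) : IsSubl (UOAdh1 X) := by
  rintro a ⟨Γ₁, i₁, d₁, ne₁, f, hfX, hf⟩ b ⟨Γ₂, i₂, d₂, ne₂, g, hgX, hg⟩
  letI := i₁; letI := i₂; letI := d₁; letI := d₂; letI := ne₁; letI := ne₂
  constructor
  · exact ⟨Γ₁ × Γ₂, inferInstance, prodDirected, inferInstance,
      fun p => f p.1 ⊔ g p.2, fun p => (hX _ (hfX p.1) _ (hgX p.2)).1,
      uoconv_sup hL hf hg⟩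
  · exact ⟨Γ₁ × Γ₂, inferInstance, prodDirected, inferInstance,
      fun p => f p.1 ⊓ g p.2, fun p => (hX _ (hfX p.1) _ (hgX p.2)).2,
      uoconv_inf hL hf hg⟩

end Lemmas

/-- lambda-O-adherence, defined by transfinite recursion on ordinals:
`OAdhOrd X 0 = X` and for `o > 0`, `OAdhOrd X o` is the 1-O-adherence of
the union of the earlier adherences. -/
noncomputable def OAdhOrd {L : Type u} [Lattice L] (X : Set L) (o : Ordinal.{u}) : Set L :=
  if o = 0 then X
  else OAdh1 (⋃ β : {β : Ordinal.{u} // β < o}, OAdhOrd X β.1)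
termination_by o
decreasing_by exact β.2

/-- lambda-uO-adherence. -/
noncomputable def UOAdhOrd {L : Type u} [Lattice L] (X : Set L) (o : Ordinal.{u}) : Set L :=
  if o = 0 then X
  else UOAdh1 (⋃ β : {β : Ordinal.{u} // β < o}, UOAdhOrd X β.1)
termination_by o
decreasing_by exact β.2

lemma oadhOrd_mono {L : Type u} [Lattice L] (X : Set L) {β o : Ordinal.{u}}
    (h : β ≤ o) : OAdhOrd X β ⊆ OAdhOrd X o := by
  rcases eq_or_lt_of_le h with rfl | hlt
  · exact subset_rfl
  · have ho : o ≠ 0 := fun h0 => (not_lt_of_ge (zero_le (a := β))) (h0 ▸ hlt)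
    conv_rhs => rw [OAdhOrd, if_neg ho]
    exact Set.Subset.trans
      (Set.subset_iUnion (fun β' : {β' : Ordinal.{u} // β' < o} => OAdhOrd X β'.1)
        ⟨β, hlt⟩) (subset_oadh1 _)

lemma uoadhOrd_mono {L : Type u} [Lattice L] (X : Set L) {β o : Ordinal.{u}}
    (h : β ≤ o) : UOAdhOrd X β ⊆ UOAdhOrd X o := by
  rcases eq_or_lt_of_le h with rfl | hlt
  · exact subset_rfl
  · have ho : o ≠ 0 := fun h0 => (not_lt_of_ge (zero_le (a := β))) (h0 ▸ hlt)
    conv_rhs => rw [UOAdhOrd, if_neg ho]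
    exact Set.Subset.trans
      (Set.subset_iUnion (fun β' : {β' : Ordinal.{u} // β' < o} => UOAdhOrd X β'.1)
        ⟨β, hlt⟩) (subset_uoadh1 _)

/-- For a sublattice `Y` of an infinitely distributive lattice, every
lambda-O-adherence and every lambda-uO-adherence of `Y` is again a sublattice. -/
theorem stmt6 {L : Type u} [Lattice L] (hL : InfDistrib L) (Y : Set L)
    (hY : IsSubl Y) (o : Ordinal.{u}) :
    IsSubl (OAdhOrd Y o) ∧ IsSubl (UOAdhOrd Y o) := by
  induction o using Ordinal.induction with
  | h o ih =>
    by_cases ho : o = 0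
    · rw [OAdhOrd, UOAdhOrd, if_pos ho, if_pos ho]
      exact ⟨hY, hY⟩
    · rw [OAdhOrd, UOAdhOrd, if_neg ho, if_neg ho]
      have hU : IsSubl (⋃ β : {β : Ordinal.{u} // β < o}, OAdhOrd Y β.1) := by
        rintro a ha b hb
        obtain ⟨_, ⟨⟨β₁, hβ₁⟩, rfl⟩, ha⟩ := ha
        obtain ⟨_, ⟨⟨β₂, hβ₂⟩, rfl⟩, hb⟩ := hb
        have hβ : max β₁ β₂ < o := max_lt hβ₁ hβ₂
        have ha' : a ∈ OAdhOrd Y (max β₁ β₂) := oadhOrd_mono Y (le_max_left _ _) ha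
        have hb' : b ∈ OAdhOrd Y (max β₁ β₂) := oadhOrd_mono Y (le_max_right _ _) hb
        obtain ⟨h1, h2⟩ := (ih _ hβ).1 a ha' b hb'
        exact ⟨Set.mem_iUnion.2 ⟨⟨max β₁ β₂, hβ⟩, h1⟩,
          Set.mem_iUnion.2 ⟨⟨max β₁ β₂, hβ⟩, h2⟩⟩
      have hU' : IsSubl (⋃ β : {β : Ordinal.{u} // β < o}, UOAdhOrd Y β.1) := by
        rintro a ha b hb
        obtain ⟨_, ⟨⟨β₁, hβ₁⟩, rfl⟩, ha⟩ := ha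
        obtain ⟨_, ⟨⟨β₂, hβ₂⟩, rfl⟩, hb⟩ := hb
        have hβ : max β₁ β₂ < o := max_lt hβ₁ hβ₂
        have ha' : a ∈ UOAdhOrd Y (max β₁ β₂) := uoadhOrd_mono Y (le_max_left _ _) ha
        have hb' : b ∈ UOAdhOrd Y (max β₁ β₂) := uoadhOrd_mono Y (le_max_right _ _) hb
        obtain ⟨h1, h2⟩ := (ih _ hβ).2 a ha' b hb'
        exact ⟨Set.mem_iUnion.2 ⟨⟨max β₁ β₂, hβ⟩, h1⟩,
          Set.mem_iUnion.2 ⟨⟨max β₁ β₂, hβ⟩, h2⟩⟩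
      exact ⟨oadh1_subl hL hU, uoadh1_subl hL hU'⟩
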